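/- Let Σ be a real symmetric positive definite 2n×2n matrix and ħ > 0. Then Σ + (iħ/2)J_n is positive semidefinite if and only if there exists S ∈ Sp(n) such that Σ − (ħ/2)(Sᵀ S)⁻¹ is positive semidefinite. -/

import Mathlib

open Matrix
open scoped ComplexOrder

noncomputable section

set_option linter.unusedSectionVars false
set_option maxHeartbeats 1600000

/-- The phase space index type for `ℝ^{2m}`, split as positions ⊕ momenta. -/
abbrev PS (m : ℕ) := Fin m ⊕ Fin m

/-- The standard symplectic matrix `J_m = [[0, I_m], [-I_m, 0]]`. -/
def symplJ (m : ℕ) : Matrix (PS m) (PS m) ℝ := Matrix.fromBlocks 0 1 (-1) 0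

/-- `S ∈ Sp(m)`: `Sᵀ J_m S = J_m`. -/
def IsSymplectic {m : ℕ} (S : Matrix (PS m) (PS m) ℝ) : Prop :=
  Sᵀ * symplJ m * S = symplJ m

/-- The quantum condition `Σ + (i·hbar/2) J_m ≥ 0`, i.e. the complex Hermitian matrix
`Σ + (i·hbar/2) J_m` is positive semidefinite. -/
def QuantumCond (m : ℕ) (hbar : ℝ) (Sig : Matrix (PS m) (PS m) ℝ) : Prop :=
  (Sig.map Complex.ofReal + (hbar / 2 : ℝ) • Complex.I • (symplJ m).map Complex.ofReal).PosSemidef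

/-- `μ ∈ ℂ` is an eigenvalue of the real matrix `N` (viewed as a complex matrix). -/
def IsEigenvalue {ι : Type} [Fintype ι] [DecidableEq ι] (N : Matrix ι ι ℝ) (μ : ℂ) : Prop :=
  (N.map Complex.ofReal - μ • 1).det = 0

namespace Statement4Aux

open scoped MatrixOrder

variable {ι : Type} [Fintype ι] [DecidableEq ι]

/-- complexification of a real matrix -/
abbrev cmap (A : Matrix ι ι ℝ) : Matrix ι ι ℂ := A.map Complex.ofReal
/-- complexification of a real vector -/
abbrev cvec (x : ι → ℝ) : ι → ℂ := fun i => (x i : ℂ)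

lemma cmap_mul (A B : Matrix ι ι ℝ) : cmap (A * B) = cmap A * cmap B := by
  ext i j
  simp [Matrix.mul_apply, Matrix.map_apply]

lemma cmap_one : cmap (1 : Matrix ι ι ℝ) = 1 := by
  ext i j
  simp [Matrix.map_apply, Matrix.one_apply]
  split <;> simp

lemma cmap_sub (A B : Matrix ι ι ℝ) : cmap (A - B) = cmap A - cmap B := by
  ext i j; simp [Matrix.map_apply]

lemma cmap_smul (a : ℝ) (A : Matrix ι ι ℝ) : cmap (a • A) = a • cmap A := by
  ext i j; simp [Matrix.map_apply, Complex.real_smul]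

lemma cmap_conjTranspose (A : Matrix ι ι ℝ) : (cmap A)ᴴ = cmap Aᵀ := by
  ext i j; simp [Matrix.conjTranspose_apply, Matrix.map_apply]

lemma cvec_dot (u w : ι → ℝ) : cvec u ⬝ᵥ cvec w = ((u ⬝ᵥ w : ℝ) : ℂ) := by
  simp [dotProduct]

lemma cmap_mulVec (B : Matrix ι ι ℝ) (u : ι → ℝ) : cmap B *ᵥ cvec u = cvec (B *ᵥ u) := by
  funext i
  simp [cvec, Matrix.mulVec, dotProduct, Matrix.map_apply]

lemma dot_symm {A : Matrix ι ι ℝ} (hA : Aᵀ = A) (u v : ι → ℝ) :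
    u ⬝ᵥ (A *ᵥ v) = v ⬝ᵥ (A *ᵥ u) := by
  rw [Matrix.dotProduct_mulVec, ← hA, Matrix.vecMul_transpose, hA, dotProduct_comm]

lemma dot_skew {K : Matrix ι ι ℝ} (hK : Kᵀ = -K) (x : ι → ℝ) : x ⬝ᵥ (K *ᵥ x) = 0 := by
  have h1 : x ⬝ᵥ K *ᵥ x = (x ᵥ* K) ⬝ᵥ x := Matrix.dotProduct_mulVec x K x
  have h2 : x ᵥ* K = Kᵀ *ᵥ x := (Matrix.mulVec_transpose K x).symm
  rw [h2, hK, Matrix.neg_mulVec, neg_dotProduct, dotProduct_comm] at h1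
  rw [dotProduct_comm]
  linarith

lemma dot_self_nonneg (v : ι → ℝ) : 0 ≤ v ⬝ᵥ v :=
  Finset.sum_nonneg fun i _ => mul_self_nonneg (v i)

lemma dot_mulVec_self (A : Matrix ι ι ℝ) (x : ι → ℝ) :
    (A *ᵥ x) ⬝ᵥ (A *ᵥ x) = x ⬝ᵥ ((Aᵀ * A) *ᵥ x) := by
  symm
  rw [← Matrix.mulVec_mulVec, Matrix.dotProduct_mulVec, Matrix.vecMul_transpose]

lemma herm_transpose_eq {A : Matrix ι ι ℝ} (h : A.IsHermitian) : Aᵀ = A := by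
  rw [← Matrix.conjTranspose_eq_transpose_of_trivial]; exact h

lemma psd_cmap {A : Matrix ι ι ℝ} (hA : A.PosSemidef) : (cmap A).PosSemidef := by
  have hAt : Aᵀ = A := herm_transpose_eq hA.1
  refine Matrix.PosSemidef.of_dotProduct_mulVec_nonneg ?_ ?_
  · rw [Matrix.IsHermitian, cmap_conjTranspose, hAt]
  · intro x
    set u : ι → ℝ := fun i => (x i).re with hu
    set v : ι → ℝ := fun i => (x i).im with hv
    have hx : x = cvec u + Complex.I • cvec v := by
      funext i
      simp [cvec, hu, hv, Complex.ext_iff]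
    have hstar : star x = cvec u - Complex.I • cvec v := by
      funext i
      simp [cvec, hu, hv, Complex.ext_iff]
    rw [hstar, hx]
    rw [Matrix.mulVec_add, Matrix.mulVec_smul, cmap_mulVec, cmap_mulVec]
    rw [sub_dotProduct, smul_dotProduct, dotProduct_add,
      dotProduct_add, dotProduct_smul, dotProduct_smul,
      cvec_dot, cvec_dot, cvec_dot, cvec_dot]
    have hsym := dot_symm hAt u v
    have h1 := hA.dotProduct_mulVec_nonneg u
    have h2 := hA.dotProduct_mulVec_nonneg v
    simp only [star_trivial] at h1 h2
    have heq : (↑(u ⬝ᵥ A *ᵥ u) + Complex.I • ↑(u ⬝ᵥ A *ᵥ v)) -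
        Complex.I • (↑(v ⬝ᵥ A *ᵥ u) + Complex.I • (↑(v ⬝ᵥ A *ᵥ v) : ℂ)) =
        ((u ⬝ᵥ A *ᵥ u + v ⬝ᵥ A *ᵥ v : ℝ) : ℂ) := by
      rw [hsym]
      simp only [smul_eq_mul]
      push_cast
      linear_combination (-((v ⬝ᵥ A *ᵥ v : ℝ) : ℂ)) * Complex.I_mul_I
    rw [heq]
    rw [Complex.zero_le_real]
    positivity

lemma smul_posSemidef {A : Matrix ι ι ℂ} (hA : A.PosSemidef) {c : ℝ} (hc : 0 ≤ c) :
    (c • A).PosSemidef := by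
  have hcA : c • A = (c : ℂ) • A := by
    ext i j; simp [Complex.real_smul]
  rw [hcA]
  refine Matrix.PosSemidef.of_dotProduct_mulVec_nonneg ?_ ?_
  · rw [Matrix.IsHermitian, Matrix.conjTranspose_smul, hA.1.eq]
    simp [Complex.conj_ofReal]
  · intro x
    rw [Matrix.smul_mulVec, dotProduct_smul, smul_eq_mul]
    exact mul_nonneg (by exact_mod_cast hc) (hA.dotProduct_mulVec_nonneg x)

lemma symplJ_transpose (m : ℕ) : (symplJ m)ᵀ = -(symplJ m) := by
  simp only [symplJ, Matrix.fromBlocks_transpose, Matrix.fromBlocks_neg,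
    Matrix.transpose_zero, Matrix.transpose_one, Matrix.transpose_neg, neg_zero, neg_neg]

lemma symplJ_mul_self (m : ℕ) : symplJ m * symplJ m = -1 := by
  rw [symplJ, Matrix.fromBlocks_multiply]
  rw [show (-1 : Matrix (PS m) (PS m) ℝ) = -(Matrix.fromBlocks 1 0 0 1) by
    rw [Matrix.fromBlocks_one], Matrix.fromBlocks_neg]
  congr 1 <;> simp

lemma symplJ_inv (m : ℕ) : (symplJ m)⁻¹ = -(symplJ m) := by
  apply Matrix.inv_eq_left_inv
  rw [Matrix.neg_mul, symplJ_mul_self, neg_neg]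

lemma symplJ_det_isUnit (m : ℕ) : IsUnit (symplJ m).det := by
  apply Matrix.isUnit_det_of_left_inverse (B := -(symplJ m))
  rw [Matrix.neg_mul, symplJ_mul_self, neg_neg]

lemma posSemidef_one_add_I_J (m : ℕ) :
    ((1 : Matrix (PS m) (PS m) ℂ) + Complex.I • cmap (symplJ m)).PosSemidef := by
  set A : Matrix (PS m) (PS m) ℂ := 1 + Complex.I • cmap (symplJ m) with hA
  have hherm : A.IsHermitian := by
    rw [Matrix.IsHermitian, hA, Matrix.conjTranspose_add, Matrix.conjTranspose_smul,
      Matrix.conjTranspose_one]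
    congr 1
    have hJij : ∀ i j, symplJ m j i = - symplJ m i j := fun i j => by
      have := congrArg (fun M => M i j) (symplJ_transpose m)
      simpa [Matrix.transpose_apply] using this
    ext i j
    simp [Matrix.conjTranspose_apply, Matrix.map_apply, hJij i j, Complex.conj_ofReal]
  have hsq : A * A = A + A := by
    have hJJ : cmap (symplJ m) * cmap (symplJ m) = -1 := by
      have h0 : cmap (symplJ m * symplJ m) = cmap (symplJ m) * cmap (symplJ m) := by
        ext i j; simp [Matrix.mul_apply, Matrix.map_apply]
      rw [← h0, symplJ_mul_self]
      ext i j
      simp [Matrix.map_apply, Matrix.one_apply]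
      split <;> simp
    rw [hA]
    have hexp : (1 + Complex.I • cmap (symplJ m)) * (1 + Complex.I • cmap (symplJ m)) =
        1 + Complex.I • cmap (symplJ m) + Complex.I • cmap (symplJ m) +
          (Complex.I * Complex.I) • (cmap (symplJ m) * cmap (symplJ m)) := by
      simp only [add_mul, mul_add, one_mul, mul_one, Matrix.smul_mul, Matrix.mul_smul, smul_smul]
      abel
    rw [hexp, Complex.I_mul_I, hJJ]
    simp only [neg_smul, one_smul, smul_neg, neg_neg]
    abel
  have hhalf : A = (1/2 : ℝ) • (A * Aᴴ) := by
    rw [hherm.eq, hsq]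
    ext i j
    simp [Complex.real_smul]
    ring
  rw [hhalf]
  exact smul_posSemidef (Matrix.posSemidef_self_mul_conjTranspose A) (by norm_num)

/-- sqrt of `G = KᵀK` commutes with skew invertible `K`. -/
lemma sqrt_comm_skew {K W : Matrix ι ι ℝ} (hKdet : IsUnit K.det) (hKt : Kᵀ = -K)
    (hW : W.PosSemidef) (hWG : W * W = Kᵀ * K) : K * W = W * K := by
  set G := Kᵀ * K with hG
  have hGdet : IsUnit G.det := by
    rw [hG, Matrix.det_mul, Matrix.det_transpose]
    exact hKdet.mul hKdet
  have hWdet : IsUnit W.det := by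
    have : IsUnit (W.det * W.det) := by rw [← Matrix.det_mul, hWG]; exact hGdet
    exact isUnit_of_mul_isUnit_left this
  have hKG : K * G = G * K := by
    rw [hG, hKt]; noncomm_ring
  have hKinv : K⁻¹ = G⁻¹ * Kᵀ := by
    refine (Matrix.inv_eq_left_inv ?_)
    rw [Matrix.mul_assoc, ← hG, Matrix.nonsing_inv_mul _ hGdet]
  have hGinv : G⁻¹ = W⁻¹ * W⁻¹ := by rw [← hWG, Matrix.mul_inv_rev]
  have hWGinv : W * G⁻¹ = W⁻¹ := by
    rw [hGinv, ← Matrix.mul_assoc, Matrix.mul_nonsing_inv _ hWdet, Matrix.one_mul]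
  have hB_eq : K * W * K⁻¹ = K * W⁻¹ * Kᵀ := by
    rw [hKinv, Matrix.mul_assoc, ← Matrix.mul_assoc W, hWGinv, Matrix.mul_assoc]
  have hBpsd : (K * W * K⁻¹).PosSemidef := by
    rw [hB_eq]
    have := hW.inv.mul_mul_conjTranspose_same K
    rwa [Matrix.conjTranspose_eq_transpose_of_trivial] at this
  have hB2 : (K * W * K⁻¹) * (K * W * K⁻¹) = G := by
    have h1 : K * W * K⁻¹ * (K * W * K⁻¹) = K * W * (K⁻¹ * K) * W * K⁻¹ := by
      simp only [Matrix.mul_assoc]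
    rw [h1, Matrix.nonsing_inv_mul _ hKdet, Matrix.mul_one,
      Matrix.mul_assoc K W W, hWG, hKG, Matrix.mul_nonsing_inv_cancel_right _ _ hKdet]
  have hBW : K * W * K⁻¹ = W := by
    refine (CFC.sq_eq_sq_iff _ _ hBpsd.nonneg hW.nonneg).mp ?_
    rw [pow_two, pow_two, hB2, hWG, hG]
  calc K * W = K * W * K⁻¹ * K := by rw [Matrix.nonsing_inv_mul_cancel_right _ _ hKdet]
  _ = W * K := by rw [hBW]

/-- A positive semidefinite "anti-symplectic-conjugation-invariant" matrix has a
positive semidefinite square root `S` with `S * J * S = J`. -/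
lemma sqrt_symplectic {P J : Matrix ι ι ℝ} (hJt : Jᵀ = -J) (hJJ : J * J = -1)
    (hPpsd : P.PosSemidef) (hPdet : IsUnit P.det) (hPJP : P * J * P = J) :
    ∃ S : Matrix ι ι ℝ, S.PosSemidef ∧ Sᵀ = S ∧ S * J * S = J ∧ S * S = P := by
  have hJtJ : Jᵀ * J = 1 := by rw [hJt, Matrix.neg_mul, hJJ, neg_neg]
  have hJJt : J * Jᵀ = 1 := by rw [hJt, Matrix.mul_neg, hJJ, neg_neg]
  have hJdet : IsUnit J.det := Matrix.isUnit_det_of_left_inverse hJtJ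
  set S := CFC.sqrt P with hSdef
  have hS2 : S * S = P := CFC.sqrt_mul_sqrt_self P hPpsd.nonneg
  have hSpsd : S.PosSemidef := (CFC.sqrt_nonneg P).posSemidef
  have hSt : Sᵀ = S := herm_transpose_eq hSpsd.1
  have hSdet : IsUnit S.det := by
    have : IsUnit (S.det * S.det) := by rw [← Matrix.det_mul, hS2]; exact hPdet
    exact isUnit_of_mul_isUnit_left this
  have hPinv : P⁻¹ = Jᵀ * P * J := by
    refine Matrix.inv_eq_left_inv ?_
    calc Jᵀ * P * J * P = Jᵀ * (P * J * P) := by simp only [Matrix.mul_assoc]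
    _ = 1 := by rw [hPJP, hJtJ]
  have hCpsd : (Jᵀ * S * J).PosSemidef := by
    have := hSpsd.mul_mul_conjTranspose_same Jᵀ
    rwa [Matrix.conjTranspose_eq_transpose_of_trivial, Matrix.transpose_transpose] at this
  have hC2 : (Jᵀ * S * J) * (Jᵀ * S * J) = P⁻¹ := by
    calc (Jᵀ * S * J) * (Jᵀ * S * J) = Jᵀ * S * (J * Jᵀ) * S * J := by
          simp only [Matrix.mul_assoc]
    _ = Jᵀ * (S * S) * J := by rw [hJJt, Matrix.mul_one]; simp only [Matrix.mul_assoc]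
    _ = P⁻¹ := by rw [hS2, hPinv]
  have hSinv2 : S⁻¹ * S⁻¹ = P⁻¹ := by rw [← Matrix.mul_inv_rev, hS2]
  have hCS : Jᵀ * S * J = S⁻¹ := by
    refine (CFC.sq_eq_sq_iff _ _ hCpsd.nonneg hSpsd.inv.nonneg).mp ?_
    rw [pow_two, pow_two, hC2, hSinv2]
  have hkey : S * Jᵀ * S * J = 1 := by
    calc S * Jᵀ * S * J = S * (Jᵀ * S * J) := by simp only [Matrix.mul_assoc]
    _ = 1 := by rw [hCS, Matrix.mul_nonsing_inv _ hSdet]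
  have hJinv : J⁻¹ = -J := by
    refine Matrix.inv_eq_left_inv ?_
    rw [Matrix.neg_mul, hJJ, neg_neg]
  have h2 : S * Jᵀ * S = -J := by
    have hh := Matrix.inv_eq_left_inv hkey
    rw [← hh, hJinv]
  refine ⟨S, hSpsd, hSt, ?_, hS2⟩
  rw [hJt] at h2
  have h3 : -(S * J * S) = -J := by
    rw [← h2]; simp only [Matrix.mul_neg, Matrix.neg_mul]
  have h4 := congrArg Neg.neg h3
  simpa using h4

lemma quantum_to_real {K : Matrix ι ι ℝ} (hKt : Kᵀ = -K) {a : ℝ}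
    (h : ((1 : Matrix ι ι ℂ) + a • Complex.I • cmap K).PosSemidef) (x : ι → ℝ) :
    a ^ 2 * ((K *ᵥ x) ⬝ᵥ (K *ᵥ x)) ≤ x ⬝ᵥ x := by
  set y := K *ᵥ x with hy
  set v : ι → ℂ := cvec x - ((a : ℂ) * Complex.I) • cvec y with hv
  have hsmul : a • Complex.I • cmap K = ((a : ℂ) * Complex.I) • cmap K := by
    ext i j
    simp [Complex.real_smul, smul_smul]
    ring
  have hstar : star v = cvec x + ((a : ℂ) * Complex.I) • cvec y := by
    funext i
    simp [hv, cvec, Complex.ext_iff]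
  have hKv : cmap K *ᵥ v = cvec y - ((a : ℂ) * Complex.I) • cvec (K *ᵥ y) := by
    rw [hv, Matrix.mulVec_sub, Matrix.mulVec_smul, cmap_mulVec, cmap_mulVec, ← hy]
  have hAv : ((1 : Matrix ι ι ℂ) + a • Complex.I • cmap K) *ᵥ v
      = cvec (x + (a ^ 2) • (K *ᵥ y)) := by
    rw [hsmul, Matrix.add_mulVec, Matrix.one_mulVec, Matrix.smul_mulVec, hKv]
    funext i
    simp [hv, cvec, Pi.smul_apply, smul_eq_mul]
    push_cast
    ring_nf
    simp [Complex.I_sq]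
    all_goals ring
  have hq := h.dotProduct_mulVec_nonneg v
  rw [hAv, hstar] at hq
  rw [add_dotProduct, smul_dotProduct, cvec_dot, cvec_dot] at hq
  have hyz : y ⬝ᵥ (x + a ^ 2 • (K *ᵥ y)) = 0 := by
    rw [dotProduct_add, dotProduct_smul, dot_skew hKt y]
    have h0 : y ⬝ᵥ x = 0 := by
      rw [hy, dotProduct_comm]
      exact dot_skew hKt x
    simp [h0]
  have hxz : x ⬝ᵥ (x + a ^ 2 • (K *ᵥ y)) = x ⬝ᵥ x - a ^ 2 * (y ⬝ᵥ y) := by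
    rw [dotProduct_add, dotProduct_smul]
    have h0 : x ⬝ᵥ (K *ᵥ y) = -(y ⬝ᵥ y) := by
      rw [Matrix.dotProduct_mulVec, show x ᵥ* K = Kᵀ *ᵥ x from (Matrix.mulVec_transpose K x).symm,
        hKt, Matrix.neg_mulVec, ← hy, neg_dotProduct]
    rw [h0]
    simp [smul_eq_mul]
    ring
  rw [hyz, hxz] at hq
  simp only [mul_zero, add_zero, smul_eq_mul, Complex.ofReal_zero] at hq
  rw [Complex.zero_le_real] at hq
  linarith

lemma sqrt_quad_bound {K W : Matrix ι ι ℝ} (hWt : Wᵀ = W) (hWG : W * W = Kᵀ * K) {a : ℝ}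
    (ha : 0 < a) (h2 : ∀ x : ι → ℝ, a ^ 2 * ((K *ᵥ x) ⬝ᵥ (K *ᵥ x)) ≤ x ⬝ᵥ x) (x : ι → ℝ) :
    a * (x ⬝ᵥ (W *ᵥ x)) ≤ x ⬝ᵥ x := by
  have hWW : (W *ᵥ x) ⬝ᵥ (W *ᵥ x) = (K *ᵥ x) ⬝ᵥ (K *ᵥ x) := by
    rw [dot_mulVec_self, dot_mulVec_self, hWt, hWG]
  have hd := dot_self_nonneg (a • (W *ᵥ x) - x)
  have hcomm : (W *ᵥ x) ⬝ᵥ x = x ⬝ᵥ (W *ᵥ x) := dotProduct_comm _ _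
  rw [sub_dotProduct, dotProduct_sub, dotProduct_sub,
    smul_dotProduct, smul_dotProduct, dotProduct_smul,
    dotProduct_smul] at hd
  simp only [smul_eq_mul, hcomm] at hd
  have hK := h2 x
  nlinarith [hK, hWW, hd]

end Statement4Aux

open Statement4Aux
open scoped MatrixOrder

/-- for a real symmetric positive definite `2n×2n` matrix `Σ` and `hbar > 0`,
the quantum condition `Σ + (i·hbar/2)J_n ≥ 0` holds if and only if there exists
`S ∈ Sp(n)` such that `Σ - (hbar/2)(SᵀS)⁻¹` is positive semidefinite. -/
theorem statement4 (n : ℕ) (hbar : ℝ) (hhb : 0 < hbar)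
    (Sig : Matrix (PS n) (PS n) ℝ) (hsym : Sig.IsSymm) (hpos : Sig.PosDef) :
    QuantumCond n hbar Sig ↔
      ∃ S : Matrix (PS n) (PS n) ℝ, IsSymplectic S ∧
        (Sig - (hbar / 2) • (Sᵀ * S)⁻¹).PosSemidef := by
  set a : ℝ := hbar / 2 with ha_def
  have ha : 0 < a := by rw [ha_def]; positivity
  set J : Matrix (PS n) (PS n) ℝ := symplJ n with hJ
  have hJt : Jᵀ = -J := symplJ_transpose n
  have hJJ : J * J = -1 := symplJ_mul_self n
  have hJdet : IsUnit J.det := symplJ_det_isUnit n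
  have hJinv : J⁻¹ = -J := symplJ_inv n
  constructor
  · -- forward direction
    intro h
    unfold QuantumCond at h
    rw [← ha_def, ← hJ] at h
    have hSigPsd := hpos.posSemidef
    set M := CFC.sqrt Sig with hMdef
    have hM2 : M * M = Sig := CFC.sqrt_mul_sqrt_self Sig hSigPsd.nonneg
    have hMpsd : M.PosSemidef := (CFC.sqrt_nonneg Sig).posSemidef
    have hMt : Mᵀ = M := herm_transpose_eq hMpsd.1
    have hMdet : IsUnit M.det := by
      have h1 : IsUnit (M.det * M.det) := by
        rw [← Matrix.det_mul, hM2]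
        exact isUnit_iff_ne_zero.mpr hpos.det_pos.ne'
      exact isUnit_of_mul_isUnit_left h1
    have hMinvdet : IsUnit M⁻¹.det :=
      Matrix.isUnit_det_of_left_inverse (Matrix.mul_nonsing_inv _ hMdet)
    have hMinvt : (M⁻¹)ᵀ = M⁻¹ := by rw [Matrix.transpose_nonsing_inv, hMt]
    set K := M⁻¹ * J * M⁻¹ with hKdef
    have hKt : Kᵀ = -K := by
      rw [hKdef, Matrix.transpose_mul, Matrix.transpose_mul, hMinvt, hJt]
      simp only [Matrix.mul_neg, Matrix.neg_mul, Matrix.mul_assoc]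
    have hKdet : IsUnit K.det := by
      rw [hKdef, Matrix.det_mul, Matrix.det_mul]
      exact (hMinvdet.mul hJdet).mul hMinvdet
    -- congruence to get 1 + a i K ≥ 0
    have hcong := h.conjTranspose_mul_mul_same (cmap M⁻¹)
    have hEq : (cmap M⁻¹)ᴴ * (cmap Sig + a • Complex.I • cmap J) * cmap M⁻¹ =
        1 + a • Complex.I • cmap K := by
      rw [cmap_conjTranspose, hMinvt, Matrix.mul_add, Matrix.add_mul]
      congr 1
      · rw [← cmap_mul, ← cmap_mul]
        have : M⁻¹ * Sig * M⁻¹ = 1 := by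
          rw [← hM2, Matrix.nonsing_inv_mul_cancel_left _ _ hMdet,
            Matrix.mul_nonsing_inv _ hMdet]
        rw [this, cmap_one]
      · rw [Matrix.mul_smul, Matrix.mul_smul, Matrix.smul_mul, Matrix.smul_mul,
          ← cmap_mul, ← cmap_mul, hKdef]
    rw [hEq] at hcong
    have h2 := fun x => quantum_to_real hKt hcong x
    -- the square root W of KᵀK
    have hGpsd : (Kᵀ * K).PosSemidef := by
      have := Matrix.posSemidef_conjTranspose_mul_self K
      rwa [Matrix.conjTranspose_eq_transpose_of_trivial] at this
    set W := CFC.sqrt (Kᵀ * K) with hWdef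
    have hW2 : W * W = Kᵀ * K := CFC.sqrt_mul_sqrt_self (Kᵀ * K) hGpsd.nonneg
    have hWpsd : W.PosSemidef := (CFC.sqrt_nonneg (Kᵀ * K)).posSemidef
    have hWt : Wᵀ = W := herm_transpose_eq hWpsd.1
    have hWdet : IsUnit W.det := by
      have h1 : IsUnit (W.det * W.det) := by
        rw [← Matrix.det_mul, hW2, Matrix.det_mul, Matrix.det_transpose]
        exact hKdet.mul hKdet
      exact isUnit_of_mul_isUnit_left h1
    have hWinvdet : IsUnit W⁻¹.det :=
      Matrix.isUnit_det_of_left_inverse (Matrix.mul_nonsing_inv _ hWdet)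
    have hKW : K * W = W * K := sqrt_comm_skew hKdet hKt hWpsd hW2
    have hbound := fun x => sqrt_quad_bound hWt hW2 ha h2 x
    -- P = M⁻¹ W⁻¹ M⁻¹ is symplectic-compatible
    set P := M⁻¹ * W⁻¹ * M⁻¹ with hPdef
    have hPpsd : P.PosSemidef := by
      have := hWpsd.inv.mul_mul_conjTranspose_same M⁻¹
      rwa [Matrix.conjTranspose_eq_transpose_of_trivial, hMinvt] at this
    have hPdet : IsUnit P.det := by
      rw [hPdef, Matrix.det_mul, Matrix.det_mul]
      exact (hMinvdet.mul hWinvdet).mul hMinvdet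
    have hKWinv : K * W⁻¹ = W⁻¹ * K := by
      calc K * W⁻¹ = W⁻¹ * (W * (K * W⁻¹)) := by
            rw [Matrix.nonsing_inv_mul_cancel_left _ _ hWdet]
      _ = W⁻¹ * (K * (W * W⁻¹)) := by rw [← Matrix.mul_assoc W K, ← hKW, Matrix.mul_assoc]
      _ = W⁻¹ * K := by rw [Matrix.mul_nonsing_inv _ hWdet, Matrix.mul_one]
    have hKinv : K⁻¹ = M * -J * M := by
      refine Matrix.inv_eq_left_inv ?_
      rw [hKdef]
      simp only [Matrix.mul_assoc]
      rw [Matrix.mul_nonsing_inv_cancel_left _ _ hMdet, Matrix.neg_mul,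
        ← Matrix.mul_assoc J J, hJJ, Matrix.neg_mul, Matrix.one_mul, neg_neg,
        Matrix.mul_nonsing_inv _ hMdet]
    have hPJP : P * J * P = J := by
      rw [hPdef]
      have e1 : M⁻¹ * W⁻¹ * M⁻¹ * J * (M⁻¹ * W⁻¹ * M⁻¹) =
          M⁻¹ * (W⁻¹ * ((M⁻¹ * J * M⁻¹) * (W⁻¹ * M⁻¹))) := by
        simp only [Matrix.mul_assoc]
      rw [e1, ← hKdef]
      have e2 : W⁻¹ * (K * (W⁻¹ * M⁻¹)) = K * (W⁻¹ * (W⁻¹ * M⁻¹)) := by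
        rw [← Matrix.mul_assoc W⁻¹ K, ← hKWinv, Matrix.mul_assoc]
      rw [e2]
      have e3 : W⁻¹ * (W⁻¹ * M⁻¹) = K⁻¹ * ((Kᵀ)⁻¹ * M⁻¹) := by
        rw [← Matrix.mul_assoc, ← Matrix.mul_inv_rev, hW2, Matrix.mul_inv_rev,
          Matrix.mul_assoc]
      rw [e3, Matrix.mul_nonsing_inv_cancel_left _ _ hKdet]
      have e6 : (Kᵀ)⁻¹ = M * J * M := by
        rw [hKt]
        have hnk : (-K)⁻¹ = -(K⁻¹) := by
          refine Matrix.inv_eq_left_inv ?_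
          rw [Matrix.neg_mul, Matrix.mul_neg, neg_neg, Matrix.nonsing_inv_mul _ hKdet]
        rw [hnk, hKinv]
        simp only [Matrix.neg_mul, Matrix.mul_neg, neg_neg]
      rw [e6]
      simp only [Matrix.mul_assoc]
      rw [Matrix.nonsing_inv_mul_cancel_left _ _ hMdet, Matrix.mul_nonsing_inv _ hMdet,
        Matrix.mul_one]
    obtain ⟨S, hSpsd, hSt, hSJS, hSS⟩ := sqrt_symplectic hJt hJJ hPpsd hPdet hPJP
    refine ⟨S, ?_, ?_⟩
    · show Sᵀ * symplJ n * S = symplJ n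
      rw [← hJ, hSt]
      exact hSJS
    · have hSS' : Sᵀ * S = P := by rw [hSt, hSS]
      have hPinv : P⁻¹ = M * W * M := by
        refine Matrix.inv_eq_left_inv ?_
        rw [hPdef]
        simp only [Matrix.mul_assoc]
        rw [Matrix.mul_nonsing_inv_cancel_left _ _ hMdet,
          Matrix.mul_nonsing_inv_cancel_left _ _ hWdet, Matrix.mul_nonsing_inv _ hMdet]
      have hquad : ((1 : Matrix (PS n) (PS n) ℝ) - a • W).PosSemidef := by
        refine Matrix.PosSemidef.of_dotProduct_mulVec_nonneg ?_ ?_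
        · show _ᴴ = _
          rw [Matrix.conjTranspose_sub, Matrix.conjTranspose_smul,
            Matrix.conjTranspose_one, hWpsd.1.eq]
          simp
        · intro x
          have hb := hbound x
          rw [Matrix.sub_mulVec, Matrix.one_mulVec, Matrix.smul_mulVec,
            dotProduct_sub, dotProduct_smul]
          simp only [star_trivial, smul_eq_mul]
          linarith
      have hcong2 := hquad.mul_mul_conjTranspose_same M
      rw [Matrix.conjTranspose_eq_transpose_of_trivial, hMt] at hcong2
      have hfin : M * (1 - a • W) * M = Sig - a • (M * W * M) := by
        rw [Matrix.mul_sub, Matrix.sub_mul, Matrix.mul_one, Matrix.mul_smul,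
          Matrix.smul_mul, hM2]
      rw [hfin] at hcong2
      rw [hSS', hPinv]
      exact hcong2
  · -- reverse direction
    rintro ⟨S, hsymp, hpsd2⟩
    have hsymp' : Sᵀ * J * S = J := by rw [hJ]; exact hsymp
    have hSdet : IsUnit S.det := by
      have h0 := congrArg Matrix.det hsymp'
      rw [Matrix.det_mul, Matrix.det_mul, Matrix.det_transpose] at h0
      have h1 : IsUnit (S.det * J.det * S.det) := by rw [h0]; exact hJdet
      exact isUnit_of_mul_isUnit_right h1
    have hSinvJ : S⁻¹ * J * (S⁻¹)ᵀ = J := by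
      have h0 := congrArg Inv.inv hsymp'
      rw [Matrix.mul_inv_rev, Matrix.mul_inv_rev, hJinv] at h0
      -- h0 : S⁻¹ * (J⁻¹ * (Sᵀ)⁻¹) = -J  (shapes may vary)
      rw [← Matrix.transpose_nonsing_inv] at h0
      have h1 : -(S⁻¹ * J * (S⁻¹)ᵀ) = -J := by
        rw [← h0]
        simp only [Matrix.mul_neg, Matrix.neg_mul, Matrix.mul_assoc]
      have h2 := congrArg Neg.neg h1
      simpa using h2
    have hSSinv : (Sᵀ * S)⁻¹ = S⁻¹ * (S⁻¹)ᵀ := by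
      rw [Matrix.mul_inv_rev, ← Matrix.transpose_nonsing_inv]
    set B := cmap ((S⁻¹)ᵀ) with hBdef
    have hBH : Bᴴ = cmap (S⁻¹) := by
      rw [hBdef, cmap_conjTranspose, Matrix.transpose_transpose]
    have hX : Bᴴ * ((1 : Matrix (PS n) (PS n) ℂ) + Complex.I • cmap J) * B =
        cmap ((Sᵀ * S)⁻¹) + Complex.I • cmap J := by
      rw [hBH, Matrix.mul_add, Matrix.add_mul, Matrix.mul_one]
      congr 1
      · rw [hBdef, ← cmap_mul, hSSinv]
      · rw [Matrix.mul_smul, Matrix.smul_mul, hBdef, ← cmap_mul, ← cmap_mul, hSinvJ]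
    have psd2 : (a • (Bᴴ * ((1 : Matrix (PS n) (PS n) ℂ) + Complex.I • cmap J) * B)).PosSemidef := by
      refine smul_posSemidef ?_ ha.le
      have hone : ((1 : Matrix (PS n) (PS n) ℂ) + Complex.I • cmap J).PosSemidef := by
        rw [hJ]
        exact posSemidef_one_add_I_J n
      exact hone.conjTranspose_mul_mul_same B
    rw [hX] at psd2
    have psd1 := psd_cmap hpsd2
    unfold QuantumCond
    rw [← ha_def, ← hJ]
    have hsplit : cmap Sig + a • Complex.I • cmap J =
        cmap (Sig - a • (Sᵀ * S)⁻¹) + a • (cmap ((Sᵀ * S)⁻¹) + Complex.I • cmap J) := by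
      rw [cmap_sub, cmap_smul, smul_add]
      abel
    rw [hsplit]
    exact psd1.add psd2
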